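/- arXiv:2106.00374 — 2 statements merged into one kernel-verified Lean document; each statement's English description precedes it below -/
import Mathlib

section
/- Assign to each edge e of G a label φ(e) ∈ {0,1}^b obtained from b independent uniformly random binary circulations φ_1,...,φ_b by letting the i-th bit of φ(e) indicate whether e ∈ φ_i. Then for any F ⊆ E: if F is an induced edge cut, the bitwise XOR ⊕_{e∈F} φ(e) equals the all-zero vector with probability 1; otherwise it equals the all-zero vector with probability exactly 2^{-b}. -/
attribute [local instance] Classical.propDecidable

/-- `inducedCut G S` = δ(S): the set of edges of `G` with exactly one endpoint in `S`. -/
def inducedCut {V : Type} (G : SimpleGraph V) (S : Set V) : Set (Sym2 V) :=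
  {e | e ∈ G.edgeSet ∧ ∃ u v : V, e = Sym2.mk u v ∧ u ∈ S ∧ v ∉ S}

/-- The cycle space of `G`: subsets of the edges of `G` in which every vertex has even
degree (binary circulations). -/
noncomputable def circulations {V : Type} [Fintype V] [DecidableEq V]
    (G : SimpleGraph V) : Finset (Finset (Sym2 V)) :=
  (G.edgeFinset.powerset).filter
    (fun φ => ∀ v : V, Even ((φ.filter (fun e => v ∈ e)).card))

namespace Stmt8Aux

open Finset
open scoped symmDiff

variable {V : Type} [Fintype V] [DecidableEq V]

/-- indicator of membership in `F`, valued in `ZMod 2` -/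
noncomputable def chi (F : Finset (Sym2 V)) (e : Sym2 V) : ZMod 2 := if e ∈ F then 1 else 0

lemma natCast_zmod2 (n : ℕ) : (n : ZMod 2) = if Even n then 0 else 1 := by
  split_ifs with h
  · obtain ⟨k, rfl⟩ := h; push_cast; ring_nf; rw [show ((2:ZMod 2)) = 0 from rfl]; ring
  · obtain ⟨k, rfl⟩ := Nat.odd_iff.mpr (Nat.not_even_iff.mp h)
    push_cast; rw [show ((2:ZMod 2)) = 0 from rfl]; ring

lemma zmod2_cases (x : ZMod 2) : x = 0 ∨ x = 1 := by revert x; decide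

lemma even_iff_cast (n : ℕ) : Even n ↔ (n : ZMod 2) = 0 := by
  rw [natCast_zmod2]; split_ifs with h <;> simp [h]

lemma mem_circ {G : SimpleGraph V} {φ : Finset (Sym2 V)} :
    φ ∈ circulations G ↔ φ ⊆ G.edgeFinset ∧
      ∀ v : V, Even ((φ.filter (fun e => v ∈ e)).card) := by
  simp [circulations, Finset.mem_filter, Finset.mem_powerset]

lemma card_symmDiff_aux (A B : Finset (Sym2 V)) :
    (A ∆ B).card + 2 * (A ∩ B).card = A.card + B.card := by
  have h1 : (A ∆ B) ∪ (A ∩ B) = A ∪ B := by ext x; simp [Finset.mem_symmDiff]; tauto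
  have hd : Disjoint (A ∆ B) (A ∩ B) := by
    rw [Finset.disjoint_left]; intro x hx; simp [Finset.mem_symmDiff] at hx ⊢; tauto
  have h2 := Finset.card_union_of_disjoint hd
  have h3 := Finset.card_union_add_card_inter A B
  rw [h1] at h2; omega

lemma even_symmDiff_iff (A B : Finset (Sym2 V)) :
    Even ((A ∆ B).card) ↔ (Even A.card ↔ Even B.card) := by
  have := card_symmDiff_aux A B
  rw [Nat.even_iff, Nat.even_iff, Nat.even_iff]; omega

/-- circulations are closed under symmetric difference -/
lemma circ_symmDiff {G : SimpleGraph V} {φ ψ : Finset (Sym2 V)}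
    (hφ : φ ∈ circulations G) (hψ : ψ ∈ circulations G) : φ ∆ ψ ∈ circulations G := by
  rw [mem_circ] at hφ hψ ⊢
  constructor
  · intro e he
    rw [Finset.mem_symmDiff] at he
    rcases he with ⟨h, _⟩ | ⟨h, _⟩
    · exact hφ.1 h
    · exact hψ.1 h
  · intro v
    have hfd : (φ ∆ ψ).filter (fun e => v ∈ e)
        = (φ.filter (fun e => v ∈ e)) ∆ (ψ.filter (fun e => v ∈ e)) := by
      ext e; simp [Finset.mem_symmDiff, Finset.mem_filter]; tauto
    rw [hfd, even_symmDiff_iff]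
    simp [hφ.2 v, hψ.2 v]

lemma inter_symmDiff (F A B : Finset (Sym2 V)) :
    F ∩ (A ∆ B) = (F ∩ A) ∆ (F ∩ B) := by
  ext e; simp [Finset.mem_symmDiff, Finset.mem_inter]; tauto

/-- Part 1: an induced cut has even intersection with every circulation. -/
lemma cut_even (G : SimpleGraph V) (S : Set V) (F : Finset (Sym2 V))
    (hFS : ↑F = inducedCut G S) (φ : Finset (Sym2 V)) (hφ : φ ∈ circulations G) :
    Even ((F ∩ φ).card) := by
  rw [mem_circ] at hφ
  -- the double-counting sum
  have hzero : ∑ v ∈ Finset.univ.filter (fun v => v ∈ S),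
      (((φ.filter (fun e => v ∈ e)).card : ZMod 2)) = 0 := by
    apply Finset.sum_eq_zero
    intro v _
    exact (even_iff_cast _).mp (hφ.2 v)
  -- rewrite each summand as a sum over φ, and swap
  have hswap : ∑ v ∈ Finset.univ.filter (fun v => v ∈ S),
      (((φ.filter (fun e => v ∈ e)).card : ZMod 2))
      = ∑ e ∈ φ, ∑ v ∈ Finset.univ.filter (fun v => v ∈ S),
          (if v ∈ e then (1 : ZMod 2) else 0) := by
    rw [Finset.sum_comm]
    apply Finset.sum_congr rfl
    intro v _
    rw [Finset.card_filter]
    push_cast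
    rfl
  -- each inner sum equals chi F e
  have hinner : ∀ e ∈ φ, ∑ v ∈ Finset.univ.filter (fun v => v ∈ S),
      (if v ∈ e then (1 : ZMod 2) else 0) = chi F e := by
    intro e he
    have heE : e ∈ G.edgeSet := by
      have := hφ.1 he; rwa [SimpleGraph.mem_edgeFinset] at this
    induction e using Sym2.ind with
    | _ u v =>
      have hadj : G.Adj u v := heE
      have hne : u ≠ v := hadj.ne
      have hpair : (Finset.univ.filter (fun w => w ∈ S)).filter (fun w => w ∈ s(u,v))
          = ({u, v} : Finset V).filter (fun w => w ∈ S) := by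
        ext w
        simp [Finset.mem_filter, Sym2.mem_iff, Finset.mem_insert, and_comm]
      have hsum : ∑ w ∈ Finset.univ.filter (fun w => w ∈ S),
          (if w ∈ s(u,v) then (1 : ZMod 2) else 0)
          = ((if u ∈ S then (1:ZMod 2) else 0) + (if v ∈ S then 1 else 0)) := by
        rw [Finset.sum_filter]
        have hpt : ∀ w : V, (if w ∈ S then (if w ∈ s(u,v) then (1 : ZMod 2) else 0) else 0)
            = (if w ∈ s(u,v) then (if w ∈ S then (1 : ZMod 2) else 0) else 0) := by
          intro w; by_cases h1 : w ∈ S <;> by_cases h2 : w ∈ s(u,v) <;> simp [h1, h2]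
        rw [Finset.sum_congr rfl (fun w _ => hpt w), ← Finset.sum_filter]
        have huniv : Finset.univ.filter (fun w => w ∈ s(u,v)) = ({u, v} : Finset V) := by
          ext w; simp [Sym2.mem_iff]
        rw [huniv, Finset.sum_pair hne]
      have hmemF : s(u,v) ∈ F ↔ ((u ∈ S ∧ v ∉ S) ∨ (v ∈ S ∧ u ∉ S)) := by
        constructor
        · intro h
          have h2 : s(u,v) ∈ inducedCut G S := by rw [← hFS]; exact Finset.mem_coe.mpr h
          obtain ⟨-, a, b, heq, ha, hb⟩ := h2
          rcases Sym2.eq_iff.mp heq with ⟨rfl, rfl⟩ | ⟨rfl, rfl⟩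
          · exact Or.inl ⟨ha, hb⟩
          · exact Or.inr ⟨ha, hb⟩
        · intro h
          have h2 : s(u,v) ∈ inducedCut G S := by
            rcases h with ⟨h1, h2⟩ | ⟨h1, h2⟩
            · exact ⟨heE, u, v, rfl, h1, h2⟩
            · exact ⟨heE, v, u, Sym2.eq_swap, h1, h2⟩
          rw [← hFS] at h2; exact Finset.mem_coe.mp h2
      rw [hsum]
      by_cases h1 : u ∈ S <;> by_cases h2 : v ∈ S <;>
        simp [chi, hmemF, h1, h2] <;> decide
  rw [even_iff_cast]
  calc ((F ∩ φ).card : ZMod 2)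
      = ((φ.filter (fun e => e ∈ F)).card : ZMod 2) := by
        rw [Finset.filter_mem_eq_inter, Finset.inter_comm]
    _ = ∑ e ∈ φ, chi F e := by simp only [chi]; rw [Finset.sum_boole]
    _ = ∑ e ∈ φ, ∑ v ∈ Finset.univ.filter (fun v => v ∈ S),
          (if v ∈ e then (1 : ZMod 2) else 0) :=
        (Finset.sum_congr rfl (fun e he => (hinner e he).symm))
    _ = 0 := by rw [← hswap, hzero]

/-- weight of a walk: sum of `chi F` along its edges -/
noncomputable def wt (F : Finset (Sym2 V)) {G : SimpleGraph V} {a b : V}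
    (p : G.Walk a b) : ZMod 2 := (p.edges.map (chi F)).sum

lemma wt_master {G : SimpleGraph V} {a b : V} (p : G.Walk a b) (f : Sym2 V → ZMod 2) :
    (p.edges.map f).sum = ∑ e ∈ G.edgeFinset, (p.edges.count e : ZMod 2) * f e := by
  rw [Finset.sum_list_map_count]
  rw [Finset.sum_subset (s₁ := p.edges.toFinset) (s₂ := G.edgeFinset)]
  · apply Finset.sum_congr rfl
    intro e _
    rw [nsmul_eq_mul]
  · intro e he
    rw [List.mem_toFinset] at he
    rw [SimpleGraph.mem_edgeFinset]
    exact p.edges_subset_edgeSet he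
  · intro e _ he
    rw [List.mem_toFinset] at he
    rw [List.count_eq_zero_of_not_mem he]
    simp

lemma walk_incid {G : SimpleGraph V} {a b : V} (p : G.Walk a b) (x : V) :
    (p.edges.map (fun e => if x ∈ e then (1 : ZMod 2) else 0)).sum
      = (if x = a then 1 else 0) + (if x = b then 1 else 0) := by
  induction p with
  | nil =>
    simp only [SimpleGraph.Walk.edges_nil, List.map_nil, List.sum_nil]
    rw [CharTwo.add_self_eq_zero]
  | @cons u w c h q ih =>
    simp only [SimpleGraph.Walk.edges_cons, List.map_cons, List.sum_cons, ih]
    have hne : u ≠ w := h.ne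
    have : (if x ∈ s(u,w) then (1 : ZMod 2) else 0) + (if x = w then 1 else 0)
        = (if x = u then 1 else 0) := by
      have hwu : w ≠ u := hne.symm
      by_cases h1 : x = u <;> by_cases h2 : x = w
      · exact absurd (h1 ▸ h2) hne
      · simp [Sym2.mem_iff, h1, h2, hne]
      · simp [Sym2.mem_iff, h1, h2, hwu] <;> decide
      · simp [Sym2.mem_iff, h1, h2]
    rw [← add_assoc, this]

/-- the odd-multiplicity edge set of a closed walk is a circulation -/
lemma closed_circ {G : SimpleGraph V} {r : V} (c : G.Walk r r) :
    G.edgeFinset.filter (fun e => ¬ Even (c.edges.count e)) ∈ circulations G := by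
  rw [mem_circ]
  refine ⟨Finset.filter_subset _ _, ?_⟩
  intro v
  rw [even_iff_cast]
  rw [Finset.filter_filter, Finset.card_filter]
  push_cast
  have hpt : ∀ e ∈ G.edgeFinset,
      (if (¬ Even (c.edges.count e)) ∧ v ∈ e then (1 : ZMod 2) else 0)
        = (c.edges.count e : ZMod 2) * (if v ∈ e then 1 else 0) := by
    intro e _
    rw [natCast_zmod2]
    by_cases h1 : Even (c.edges.count e) <;> by_cases h2 : v ∈ e <;> simp [h1, h2]
  calc ∑ e ∈ G.edgeFinset, (if (¬ Even (c.edges.count e)) ∧ v ∈ e then (1 : ZMod 2) else 0)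
      = ∑ e ∈ G.edgeFinset, (c.edges.count e : ZMod 2) * (if v ∈ e then 1 else 0) :=
        Finset.sum_congr rfl hpt
    _ = (c.edges.map (fun e => if v ∈ e then (1 : ZMod 2) else 0)).sum :=
        (wt_master c _).symm
    _ = 0 := by rw [walk_incid]; exact CharTwo.add_self_eq_zero _

lemma wt_closed {G : SimpleGraph V} {F : Finset (Sym2 V)}
    (hH : ∀ φ ∈ circulations G, Even ((F ∩ φ).card)) {r : V} (c : G.Walk r r) :
    wt F c = 0 := by
  set φc := G.edgeFinset.filter (fun e => ¬ Even (c.edges.count e)) with hφc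
  have hc := hH φc (closed_circ c)
  rw [even_iff_cast] at hc
  have hpt : ∀ e ∈ G.edgeFinset,
      (c.edges.count e : ZMod 2) * chi F e
        = (if (¬ Even (c.edges.count e)) ∧ e ∈ F then (1 : ZMod 2) else 0) := by
    intro e _
    rw [natCast_zmod2, chi]
    by_cases h1 : Even (c.edges.count e) <;> by_cases h2 : e ∈ F <;> simp [h1, h2]
  calc wt F c = ∑ e ∈ G.edgeFinset, (c.edges.count e : ZMod 2) * chi F e := wt_master c _
    _ = ∑ e ∈ G.edgeFinset, (if (¬ Even (c.edges.count e)) ∧ e ∈ F then (1 : ZMod 2) else 0) :=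
        Finset.sum_congr rfl hpt
    _ = ((G.edgeFinset.filter (fun e => (¬ Even (c.edges.count e)) ∧ e ∈ F)).card : ZMod 2) := by
        rw [Finset.sum_boole]
    _ = ((F ∩ φc).card : ZMod 2) := by
        have hset : G.edgeFinset.filter (fun e => (¬ Even (c.edges.count e)) ∧ e ∈ F)
            = F ∩ φc := by
          rw [hφc]
          ext e
          simp only [Finset.mem_filter, Finset.mem_inter]
          tauto
        rw [hset]
    _ = 0 := hc

lemma wt_welldef {G : SimpleGraph V} {F : Finset (Sym2 V)}
    (hH : ∀ φ ∈ circulations G, Even ((F ∩ φ).card)) {r v : V}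
    (p q : G.Walk r v) : wt F p = wt F q := by
  have h := wt_closed hH (p.append q.reverse)
  rw [wt, SimpleGraph.Walk.edges_append, List.map_append, List.sum_append,
    SimpleGraph.Walk.edges_reverse, List.map_reverse, List.sum_reverse] at h
  have h2 : wt F p = - wt F q := eq_neg_of_add_eq_zero_left h
  rw [h2, CharTwo.neg_eq]

/-- Part 2 key lemma: orthogonal to all circulations implies induced cut. -/
lemma orth_cut {G : SimpleGraph V} (hG : G.Connected) {F : Finset (Sym2 V)}
    (hF : ↑F ⊆ G.edgeSet)
    (hH : ∀ φ ∈ circulations G, Even ((F ∩ φ).card)) :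
    ∃ S : Set V, ↑F = inducedCut G S := by
  obtain ⟨r⟩ := hG.nonempty
  set f : V → ZMod 2 := fun v => wt F (hG.preconnected r v).some with hfdef
  have hf : ∀ v (p : G.Walk r v), f v = wt F p := fun v p => wt_welldef hH _ p
  have key : ∀ u v, G.Adj u v → f v = f u + chi F s(u,v) := by
    intro u v h
    have p := (hG.preconnected r u).some
    have h1 := hf v (p.concat h)
    rw [wt, SimpleGraph.Walk.edges_concat, List.concat_eq_append, List.map_append,
      List.sum_append] at h1
    rw [h1, hf u p, wt]
    simp
  refine ⟨{v | f v = 1}, ?_⟩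
  ext e
  induction e using Sym2.ind with
  | _ u v =>
    simp only [Finset.mem_coe]
    constructor
    · intro h
      have hE : s(u,v) ∈ G.edgeSet := hF (Finset.mem_coe.mpr h)
      have hadj : G.Adj u v := hE
      have hk := key u v hadj
      rw [chi, if_pos h] at hk
      rcases zmod2_cases (f u) with h0 | h1
      · refine ⟨hE, v, u, Sym2.eq_swap, ?_, ?_⟩
        · show f v = 1
          rw [hk, h0, zero_add]
        · show ¬ (f u = 1)
          rw [h0]; decide
      · refine ⟨hE, u, v, rfl, h1, ?_⟩
        show ¬ (f v = 1)
        rw [hk, h1]; decide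
    · rintro ⟨hE, a, b, heq, ha, hb⟩
      have hadj : G.Adj a b := by rw [heq] at hE; exact hE
      have hk := key a b hadj
      by_cases hmem : s(a,b) ∈ F
      · rw [heq]; exact hmem
      · exfalso
        rw [chi, if_neg hmem, add_zero] at hk
        exact hb (hk.trans ha)

lemma half {G : SimpleGraph V} {F : Finset (Sym2 V)}
    (hodd : ∃ φ₀ ∈ circulations G, ¬ Even ((F ∩ φ₀).card)) :
    2 * ((circulations G).filter (fun φ => Even ((F ∩ φ).card))).card
      = (circulations G).card := by
  obtain ⟨φ₀, hφ₀, hoddF⟩ := hodd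
  have flip : ∀ x ∈ circulations G,
      (Even ((F ∩ (x ∆ φ₀)).card) ↔ ¬ Even ((F ∩ x).card)) := by
    intro x _
    rw [inter_symmDiff, even_symmDiff_iff]
    constructor
    · intro h hx
      exact hoddF (h.mp hx)
    · intro h
      constructor
      · intro hx; exact absurd hx h
      · intro hf; exact absurd hf hoddF
  have hbij : ((circulations G).filter (fun φ => Even ((F ∩ φ).card))).card
      = ((circulations G).filter (fun φ => ¬ Even ((F ∩ φ).card))).card := by
    apply Finset.card_bij' (i := fun x _ => x ∆ φ₀) (j := fun x _ => x ∆ φ₀)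
    · intro a ha
      rw [Finset.mem_filter] at ha ⊢
      exact ⟨circ_symmDiff ha.1 hφ₀, fun h => (flip a ha.1).mp h ha.2⟩
    · intro a ha
      rw [Finset.mem_filter] at ha ⊢
      exact ⟨circ_symmDiff ha.1 hφ₀, (flip a ha.1).mpr ha.2⟩
    · intro a _; exact symmDiff_symmDiff_cancel_right φ₀ a
    · intro a _; exact symmDiff_symmDiff_cancel_right φ₀ a
  rw [two_mul]
  nth_rewrite 2 [hbij]
  exact Finset.card_filter_add_card_filter_not _

lemma count_fun (G : SimpleGraph V) (F : Finset (Sym2 V)) (b : ℕ) :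
    (Finset.univ.filter (fun Φ : Fin b → {φ // φ ∈ circulations G} =>
        ∀ i : Fin b, Even ((F ∩ (Φ i : Finset (Sym2 V))).card))).card
      = ((circulations G).filter (fun φ => Even ((F ∩ φ).card))).card ^ b := by
  rw [← Fintype.card_subtype]
  have e1 : {Φ : Fin b → {φ // φ ∈ circulations G} //
        ∀ i : Fin b, Even ((F ∩ (Φ i : Finset (Sym2 V))).card)}
      ≃ ∀ _ : Fin b, {x : {φ // φ ∈ circulations G} //
          Even ((F ∩ (x : Finset (Sym2 V))).card)} :=
    Equiv.subtypePiEquivPi (p := fun (_ : Fin b) (x : {φ // φ ∈ circulations G}) =>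
      Even ((F ∩ (x : Finset (Sym2 V))).card))
  rw [Fintype.card_congr e1, Fintype.card_pi]
  have e2 : {x : {φ // φ ∈ circulations G} // Even ((F ∩ (x : Finset (Sym2 V))).card)}
      ≃ {φ : Finset (Sym2 V) // φ ∈ circulations G ∧ Even ((F ∩ φ).card)} :=
    Equiv.subtypeSubtypeEquivSubtypeInter (fun φ => φ ∈ circulations G)
      (fun φ => Even ((F ∩ φ).card))
  rw [Finset.prod_congr rfl (fun i _ => Fintype.card_congr e2)]
  rw [Finset.prod_const, Finset.card_univ, Fintype.card_fin]
  congr 1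
  rw [Fintype.card_subtype]
  congr 1
  ext φ
  simp [Finset.mem_filter]

end Stmt8Aux

/-- Labels from `b` i.i.d. uniform binary circulations `Φ 0, …, Φ (b-1)` (the `i`-th bit of
the label of `e` indicates `e ∈ Φ i`; thus `⊕_{e∈F} φ(e) = 0` iff `|F ∩ Φ i|` is even for
all `i`).  If `F` is an induced edge cut the XOR of its labels is the zero vector with
probability 1; otherwise this happens with probability exactly `2^{-b}`. -/
theorem stmt8 {V : Type} [Fintype V] [DecidableEq V] (G : SimpleGraph V)
    (hG : G.Connected) (b : ℕ) (F : Finset (Sym2 V)) (hF : ↑F ⊆ G.edgeSet) :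
    ((∃ S : Set V, ↑F = inducedCut G S) →
      ∀ Φ : Fin b → {φ // φ ∈ circulations G}, ∀ i : Fin b,
        Even ((F ∩ (Φ i : Finset (Sym2 V))).card)) ∧
    (¬ (∃ S : Set V, ↑F = inducedCut G S) →
      (Finset.univ.filter (fun Φ : Fin b → {φ // φ ∈ circulations G} =>
          ∀ i : Fin b, Even ((F ∩ (Φ i : Finset (Sym2 V))).card))).card * 2 ^ b
        = (circulations G).card ^ b) := by
  constructor
  · rintro ⟨S, hFS⟩ Φ i
    exact Stmt8Aux.cut_even G S F hFS _ (Φ i).2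
  · intro hnc
    have hodd : ∃ φ₀ ∈ circulations G, ¬ Even ((F ∩ φ₀).card) := by
      by_contra h
      push_neg at h
      exact hnc (Stmt8Aux.orth_cut hG hF h)
    rw [Stmt8Aux.count_fun G F b, ← mul_pow, mul_comm, Stmt8Aux.half hodd]
end

section
/- Let T be a spanning tree of G rooted at r, F ⊆ E, and s,t ∈ V. Assign to each faulty edge e ∈ F a vector φ'(e) ∈ GF(2)^{b+2} whose last b coordinates are the cycle-space label φ(e), and whose first two coordinates are 10 if e is a tree edge on the r-s tree path but not the r-t path, 01 if e is on the r-t path but not the r-s path, and 00 otherwise. Assuming the cycle-space labels correctly identify induced edge cuts (i.e., F' ⊆ F is an induced edge cut iff ⊕_{e∈F'} φ(e) = 0), then s and t are disconnected by F if and only if there exists x ∈ GF(2)^{F} and j ∈ {1,2} with ⊕_{e∈F} x_e φ'(e) = w_j, where w_1 = 10...0 and w_2 = 010...0. -/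
attribute [local instance] Classical.propDecidable

/-- `e` lies on the (unique) path in `T` from `r` to `x`. -/
def OnTreePath {V : Type} (T : SimpleGraph V) (r x : V) (e : Sym2 V) : Prop :=
  ∀ p : T.Walk r x, p.IsPath → e ∈ p.edges

noncomputable def indS {V : Type} (S : Set V) (v : V) : ZMod 2 := if v ∈ S then 1 else 0

noncomputable def chiS {V : Type} (S : Set V) : Sym2 V → ZMod 2 :=
  Sym2.lift ⟨fun u v => indS S u + indS S v, fun u v => add_comm _ _⟩

lemma chiS_mk {V : Type} (S : Set V) (u v : V) :
    chiS S (Sym2.mk u v) = indS S u + indS S v := rfl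

lemma walk_sum_chiS {V : Type} (S : Set V) {G : SimpleGraph V} {a c : V} (p : G.Walk a c) :
    (p.edges.map (chiS S)).sum = indS S a + indS S c := by
  induction p with
  | nil => simp [CharTwo.add_self_eq_zero]
  | cons h p ih =>
    simp only [SimpleGraph.Walk.edges_cons, List.map_cons, List.sum_cons, ih, chiS_mk]
    ring_nf
    rw [show (2 : ZMod 2) = 0 by decide]
    ring

lemma mem_cut_iff {V : Type} (S : Set V) {G : SimpleGraph V} {e : Sym2 V}
    (he : e ∈ G.edgeSet) : e ∈ inducedCut G S ↔ chiS S e = 1 := by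
  induction e with
  | _ u v =>
    constructor
    · rintro ⟨-, u', v', huv, hu', hv'⟩
      rw [huv, chiS_mk, indS, indS, if_pos hu', if_neg hv', add_zero]
    · intro h
      rw [chiS_mk, indS, indS] at h
      refine ⟨he, ?_⟩
      by_cases hu : u ∈ S <;> by_cases hv : v ∈ S <;> simp [hu, hv] at h
      · exact ⟨u, v, rfl, hu, hv⟩
      · exact ⟨v, u, Sym2.eq_swap, hv, hu⟩

lemma crossing {V : Type} (S : Set V) {G : SimpleGraph V} {a c : V} (p : G.Walk a c)
    (ha : a ∈ S) (hc : c ∉ S) : ∃ e ∈ p.edges, e ∈ inducedCut G S := by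
  have hsum : (p.edges.map (chiS S)).sum = 1 := by
    rw [walk_sum_chiS, indS, indS, if_pos ha, if_neg hc, add_zero]
  by_contra hcon
  push_neg at hcon
  have : (p.edges.map (chiS S)).sum = 0 := by
    apply List.sum_eq_zero
    intro x hx
    rw [List.mem_map] at hx
    obtain ⟨e, he, rfl⟩ := hx
    have hne : chiS S e ≠ 1 := fun h =>
      hcon e he ((mem_cut_iff S (p.edges_subset_edgeSet he)).2 h)
    revert hne; generalize chiS S e = z; revert z; decide
  rw [this] at hsum; exact one_ne_zero hsum.symm

lemma sum_path_indicator {V : Type} (S : Set V) {G T : SimpleGraph V} (hTG : T ≤ G) {a c : V}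
    (p : T.Walk a c) (hp : p.IsPath) (F' : Finset (Sym2 V)) (hF' : ↑F' = inducedCut G S) :
    (∑ e ∈ F', (if e ∈ p.edges then (1 : ZMod 2) else 0)) = indS S a + indS S c := by
  classical
  have h1 : (∑ e ∈ F', (if e ∈ p.edges then (1 : ZMod 2) else 0))
      = ∑ e ∈ F' ∩ p.edges.toFinset, (1 : ZMod 2) := by
    rw [← Finset.sum_ite_mem]
    apply Finset.sum_congr rfl
    intro e _
    simp [List.mem_toFinset]
  have h2 : (∑ e ∈ p.edges.toFinset, (if e ∈ F' then (1 : ZMod 2) else 0))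
      = ∑ e ∈ p.edges.toFinset ∩ F', (1 : ZMod 2) := by
    rw [← Finset.sum_ite_mem]
  have h3 : (∑ e ∈ p.edges.toFinset, (if e ∈ F' then (1 : ZMod 2) else 0))
      = ∑ e ∈ p.edges.toFinset, chiS S e := by
    apply Finset.sum_congr rfl
    intro e he
    rw [List.mem_toFinset] at he
    have heE : e ∈ G.edgeSet := SimpleGraph.edgeSet_mono hTG (p.edges_subset_edgeSet he)
    by_cases hmem : e ∈ F'
    · rw [if_pos hmem]
      have : e ∈ inducedCut G S := by rw [← hF']; exact_mod_cast hmem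
      exact ((mem_cut_iff S heE).1 this).symm
    · rw [if_neg hmem]
      have : e ∉ inducedCut G S := by rw [← hF']; exact_mod_cast hmem
      have := mt (mem_cut_iff S heE).2 this
      revert this; generalize chiS S e = z; revert z; decide
  have h4 : (∑ e ∈ p.edges.toFinset, chiS S e) = (p.edges.map (chiS S)).sum :=
    List.sum_toFinset _ hp.edges_nodup
  rw [h1, Finset.inter_comm, ← h2, h3, h4, walk_sum_chiS]

lemma onTreePath_iff {V : Type} {T : SimpleGraph V} (hT : T.IsTree) {r x : V}
    (p : T.Walk r x) (hp : p.IsPath) (e : Sym2 V) :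
    OnTreePath T r x e ↔ e ∈ p.edges := by
  constructor
  · exact fun h => h p hp
  · intro he q hq
    rwa [(hT.existsUnique_path r x).unique hq hp]

lemma key_parity {V : Type} {G T : SimpleGraph V} (hT : T.IsTree) (hTG : T ≤ G)
    (r s t : V) (S : Set V) (F' : Finset (Sym2 V)) (hF' : ↑F' = inducedCut G S) :
    (∑ e ∈ F', (if e ∈ T.edgeSet ∧ OnTreePath T r s e ∧ ¬ OnTreePath T r t e
        then (1 : ZMod 2) else 0))
      + (∑ e ∈ F', (if e ∈ T.edgeSet ∧ OnTreePath T r t e ∧ ¬ OnTreePath T r s e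
        then (1 : ZMod 2) else 0))
      = indS S s + indS S t := by
  classical
  obtain ⟨Ps, hPs, -⟩ := hT.existsUnique_path r s
  obtain ⟨Pt, hPt, -⟩ := hT.existsUnique_path r t
  have hs := onTreePath_iff hT Ps hPs
  have ht := onTreePath_iff hT Pt hPt
  have point : ∀ e : Sym2 V,
      (if e ∈ T.edgeSet ∧ OnTreePath T r s e ∧ ¬ OnTreePath T r t e
        then (1 : ZMod 2) else 0)
      + (if e ∈ T.edgeSet ∧ OnTreePath T r t e ∧ ¬ OnTreePath T r s e
        then (1 : ZMod 2) else 0)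
      = (if e ∈ Ps.edges then (1 : ZMod 2) else 0)
        + (if e ∈ Pt.edges then (1 : ZMod 2) else 0) := by
    intro e
    by_cases h1 : e ∈ Ps.edges <;> by_cases h2 : e ∈ Pt.edges
    · simp [hs, ht, h1, h2]; decide
    · have : e ∈ T.edgeSet := Ps.edges_subset_edgeSet h1
      simp [hs, ht, h1, h2, this]
    · have : e ∈ T.edgeSet := Pt.edges_subset_edgeSet h2
      simp [hs, ht, h1, h2, this]
    · simp [hs, ht, h1, h2]
  rw [← Finset.sum_add_distrib, Finset.sum_congr rfl (fun e _ => point e),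
    Finset.sum_add_distrib, sum_path_indicator S hTG Ps hPs F' hF',
    sum_path_indicator S hTG Pt hPt F' hF']
  ring_nf
  rw [show (2 : ZMod 2) = 0 by decide]
  ring

lemma zmod2_cases (z : ZMod 2) : z = 0 ∨ z = 1 := by revert z; decide

lemma sum_triple {ι M : Type} [AddCommMonoid M] (A : Finset ι) (f g : ι → ZMod 2) (h : ι → M) :
    (∑ e ∈ A, ((f e, g e, h e) : ZMod 2 × ZMod 2 × M))
      = (∑ e ∈ A, f e, ∑ e ∈ A, g e, ∑ e ∈ A, h e) := by
  refine Prod.ext ?_ (Prod.ext ?_ ?_) <;> simp [Prod.fst_sum, Prod.snd_sum]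

lemma sum_eval {V : Type} {G T : SimpleGraph V} (hT : T.IsTree) (hTG : T ≤ G)
    (r s t : V) (b : ℕ) (φ : Sym2 V → Fin b → ZMod 2) (S : Set V) (F' : Finset (Sym2 V))
    (hF'cut : ↑F' = inducedCut G S) :
    ∃ c1 c2 : ZMod 2,
      (∑ e ∈ F',
          (((if e ∈ T.edgeSet ∧ OnTreePath T r s e ∧ ¬ OnTreePath T r t e
              then (1 : ZMod 2) else 0),
            (if e ∈ T.edgeSet ∧ OnTreePath T r t e ∧ ¬ OnTreePath T r s e
              then (1 : ZMod 2) else 0),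
            φ e) : ZMod 2 × ZMod 2 × (Fin b → ZMod 2)))
        = (c1, c2, ∑ e ∈ F', φ e) ∧ c1 + c2 = indS S s + indS S t := by
  refine ⟨_, _, sum_triple F' _ _ φ, ?_⟩
  exact key_parity hT hTG r s t S F' hF'cut

lemma zmod2_pair (c1 c2 : ZMod 2) (h : c1 + c2 = 1) :
    (c1 = 1 ∧ c2 = 0) ∨ (c1 = 0 ∧ c2 = 1) := by revert c1 c2; decide

/-- Assuming the cycle-space labels `φ : E → GF(2)^b` correctly identify induced edge cuts
among subsets of `F`, the vertices `s` and `t` are disconnected by `F` iff the linear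
system over GF(2) on the augmented labels
`φ'(e) = (1[e tree edge on r-s path only], 1[e tree edge on r-t path only], φ(e))`
has a solution `x` with right-hand side `w₁ = (1,0,0)` or `w₂ = (0,1,0)`. -/
theorem stmt11 {V : Type} [Fintype V] [DecidableEq V] (G T : SimpleGraph V)
    (hG : G.Connected) (hT : T.IsTree) (hTG : T ≤ G) (r s t : V)
    (b : ℕ) (F : Finset (Sym2 V)) (hFE : ↑F ⊆ G.edgeSet)
    (φ : Sym2 V → (Fin b → ZMod 2))
    (hφ : ∀ F' ⊆ F, ((∑ e ∈ F', φ e) = 0 ↔ ∃ S : Set V, ↑F' = inducedCut G S)) :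
    ¬ (G.deleteEdges ↑F).Reachable s t ↔
      ∃ x : Sym2 V → ZMod 2, ∃ j : Fin 2,
        (∑ e ∈ F, x e •
            (((if e ∈ T.edgeSet ∧ OnTreePath T r s e ∧ ¬ OnTreePath T r t e
                then (1 : ZMod 2) else 0),
              (if e ∈ T.edgeSet ∧ OnTreePath T r t e ∧ ¬ OnTreePath T r s e
                then (1 : ZMod 2) else 0),
              φ e) : ZMod 2 × ZMod 2 × (Fin b → ZMod 2)))
          = if j = 0 then ((1, 0, 0) : ZMod 2 × ZMod 2 × (Fin b → ZMod 2))
            else (0, 1, 0) := by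
  classical
  constructor
  · intro h
    set S : Set V := {v | (G.deleteEdges ↑F).Reachable s v} with hSdef
    have hsS : s ∈ S := SimpleGraph.Reachable.refl s
    have htS : t ∉ S := h
    have hcutF : inducedCut G S ⊆ ↑F := by
      rintro e ⟨heE, u, w, rfl, hu, hw⟩
      by_contra heF
      have hadj : (G.deleteEdges ↑F).Adj u w := by
        rw [SimpleGraph.deleteEdges_adj]
        exact ⟨(SimpleGraph.mem_edgeSet G).1 heE, heF⟩
      exact hw (hu.trans hadj.reachable)
    set F' : Finset (Sym2 V) := F.filter (· ∈ inducedCut G S) with hF'def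
    have hF'F : F' ⊆ F := Finset.filter_subset _ _
    have hF'cut : ↑F' = inducedCut G S := by
      ext e
      simp only [hF'def, Finset.coe_filter, Set.mem_setOf_eq]
      exact ⟨fun ⟨_, h2⟩ => h2, fun h2 => ⟨hcutF h2, h2⟩⟩
    have hphi0 : (∑ e ∈ F', φ e) = 0 := (hφ F' hF'F).2 ⟨S, hF'cut⟩
    obtain ⟨c1, c2, hsum, hc⟩ := sum_eval hT hTG r s t b φ S F' hF'cut
    rw [hphi0] at hsum
    have hc1 : c1 + c2 = 1 := by
      rw [hc, indS, indS, if_pos hsS, if_neg htS, add_zero]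
    have hcases := zmod2_pair c1 c2 hc1
    refine ⟨fun e => if e ∈ F' then 1 else 0, ?_⟩
    have hsum2 : (∑ e ∈ F, (if e ∈ F' then (1 : ZMod 2) else 0) •
        (((if e ∈ T.edgeSet ∧ OnTreePath T r s e ∧ ¬ OnTreePath T r t e
            then (1 : ZMod 2) else 0),
          (if e ∈ T.edgeSet ∧ OnTreePath T r t e ∧ ¬ OnTreePath T r s e
            then (1 : ZMod 2) else 0),
          φ e) : ZMod 2 × ZMod 2 × (Fin b → ZMod 2)))
        = (c1, c2, 0) := by
      rw [← hsum]
      rw [show (∑ e ∈ F, (if e ∈ F' then (1 : ZMod 2) else 0) •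
          (((if e ∈ T.edgeSet ∧ OnTreePath T r s e ∧ ¬ OnTreePath T r t e
              then (1 : ZMod 2) else 0),
            (if e ∈ T.edgeSet ∧ OnTreePath T r t e ∧ ¬ OnTreePath T r s e
              then (1 : ZMod 2) else 0),
            φ e) : ZMod 2 × ZMod 2 × (Fin b → ZMod 2)))
        = ∑ e ∈ F, (if e ∈ F' then
          (((if e ∈ T.edgeSet ∧ OnTreePath T r s e ∧ ¬ OnTreePath T r t e
              then (1 : ZMod 2) else 0),
            (if e ∈ T.edgeSet ∧ OnTreePath T r t e ∧ ¬ OnTreePath T r s e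
              then (1 : ZMod 2) else 0),
            φ e) : ZMod 2 × ZMod 2 × (Fin b → ZMod 2)) else 0) from
        Finset.sum_congr rfl (fun e _ => by split_ifs <;> simp)]
      rw [Finset.sum_ite_mem, Finset.inter_eq_right.2 hF'F]
    rcases hcases with ⟨h1, h2⟩ | ⟨h1, h2⟩
    · exact ⟨0, by rw [hsum2, h1, h2]; simp⟩
    · exact ⟨1, by rw [hsum2, h1, h2]; simp⟩
  · rintro ⟨x, j, hx⟩ hre
    set F' : Finset (Sym2 V) := F.filter (fun e => x e = 1) with hF'def
    have hF'F : F' ⊆ F := Finset.filter_subset _ _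
    have hsum2 : (∑ e ∈ F, x e •
        (((if e ∈ T.edgeSet ∧ OnTreePath T r s e ∧ ¬ OnTreePath T r t e
            then (1 : ZMod 2) else 0),
          (if e ∈ T.edgeSet ∧ OnTreePath T r t e ∧ ¬ OnTreePath T r s e
            then (1 : ZMod 2) else 0),
          φ e) : ZMod 2 × ZMod 2 × (Fin b → ZMod 2)))
        = ∑ e ∈ F',
        (((if e ∈ T.edgeSet ∧ OnTreePath T r s e ∧ ¬ OnTreePath T r t e
            then (1 : ZMod 2) else 0),
          (if e ∈ T.edgeSet ∧ OnTreePath T r t e ∧ ¬ OnTreePath T r s e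
            then (1 : ZMod 2) else 0),
          φ e) : ZMod 2 × ZMod 2 × (Fin b → ZMod 2)) := by
      rw [hF'def, Finset.sum_filter]
      apply Finset.sum_congr rfl
      intro e _
      rcases zmod2_cases (x e) with h | h
      · rw [h, zero_smul, if_neg (by decide : ¬(0 : ZMod 2) = 1)]
      · rw [h, one_smul, if_pos rfl]
    rw [hsum2] at hx
    rw [sum_triple F'
      (fun e => if e ∈ T.edgeSet ∧ OnTreePath T r s e ∧ ¬ OnTreePath T r t e
        then (1 : ZMod 2) else 0)
      (fun e => if e ∈ T.edgeSet ∧ OnTreePath T r t e ∧ ¬ OnTreePath T r s e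
        then (1 : ZMod 2) else 0) φ] at hx
    have hcase : ((∑ e ∈ F', if e ∈ T.edgeSet ∧ OnTreePath T r s e ∧ ¬ OnTreePath T r t e
          then (1 : ZMod 2) else 0) = 1
        ∧ (∑ e ∈ F', if e ∈ T.edgeSet ∧ OnTreePath T r t e ∧ ¬ OnTreePath T r s e
          then (1 : ZMod 2) else 0) = 0 ∧ (∑ e ∈ F', φ e) = 0)
      ∨ ((∑ e ∈ F', if e ∈ T.edgeSet ∧ OnTreePath T r s e ∧ ¬ OnTreePath T r t e
          then (1 : ZMod 2) else 0) = 0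
        ∧ (∑ e ∈ F', if e ∈ T.edgeSet ∧ OnTreePath T r t e ∧ ¬ OnTreePath T r s e
          then (1 : ZMod 2) else 0) = 1 ∧ (∑ e ∈ F', φ e) = 0) := by
      by_cases hj : j = 0
      · rw [if_pos hj] at hx
        simp only [Prod.mk.injEq] at hx
        exact Or.inl hx
      · rw [if_neg hj] at hx
        simp only [Prod.mk.injEq] at hx
        exact Or.inr hx
    have hphi0 : (∑ e ∈ F', φ e) = 0 := by
      rcases hcase with ⟨_, _, h3⟩ | ⟨_, _, h3⟩ <;> exact h3
    obtain ⟨S, hF'cut⟩ := (hφ F' hF'F).1 hphi0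
    have hkey := key_parity hT hTG r s t S F' hF'cut
    have hone : indS S s + indS S t = 1 := by
      rw [← hkey]
      rcases hcase with ⟨h1, h2, -⟩ | ⟨h1, h2, -⟩ <;> rw [h1, h2]
      · rw [add_zero]
      · rw [zero_add]
    have hst : (s ∈ S ∧ t ∉ S) ∨ (t ∈ S ∧ s ∉ S) := by
      rw [indS, indS] at hone
      by_cases hs : s ∈ S <;> by_cases ht : t ∈ S
      · rw [if_pos hs, if_pos ht] at hone; exact absurd hone (by decide)
      · exact Or.inl ⟨hs, ht⟩
      · exact Or.inr ⟨ht, hs⟩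
      · rw [if_neg hs, if_neg ht] at hone; exact absurd hone (by decide)
    have main : ∀ a c : V, a ∈ S → c ∉ S → (G.deleteEdges ↑F).Reachable a c → False := by
      intro a c ha hc hr
      obtain ⟨p⟩ := hr
      obtain ⟨e, hep, heCut⟩ := crossing S p ha hc
      obtain ⟨heE, u, w, hew, hu, hw⟩ := heCut
      have heG : e ∈ inducedCut G S :=
        ⟨SimpleGraph.edgeSet_mono (SimpleGraph.deleteEdges_le _) heE, u, w, hew, hu, hw⟩
      have heF' : e ∈ F' := by
        have : e ∈ (↑F' : Set (Sym2 V)) := by rw [hF'cut]; exact heG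
        exact_mod_cast this
      have heF : e ∈ F := hF'F heF'
      have hmem : e ∈ (G.deleteEdges ↑F).edgeSet := p.edges_subset_edgeSet hep
      rw [SimpleGraph.edgeSet_deleteEdges] at hmem
      exact hmem.2 heF
    rcases hst with ⟨hs, ht⟩ | ⟨hs, ht⟩
    · exact main s t hs ht hre
    · exact main t s hs ht hre.symm
end
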